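/- arXiv:1605.00704 — 5 statements merged into one kernel-verified Lean document; each statement's English description precedes it below -/
import Mathlib

section
/- Suppose functions x0, x1, y0, y1, ξ0, ξ1, η0, η1 : ℝ → ℝ are differentiable on (0,∞) and satisfy the system s·x0' = -η0·x0 - x1, s·x1' = -η1·x0 + s·x0 + ξ0·x0 + ξ1·x1, s·y1' = -ξ1·y1 + y0, s·y0' = -ξ0·y1 - s·y1 + η0·y0 + η1·y1. Then for all s in (0,∞), (x0·y0 + x1·y1)' (s) = 0; that is, the trace x0·y0 + x1·y1 is constant on (0,∞). -/
open Set

theorem stmt_1 (x0 x1 y0 y1 ξ0 ξ1 η0 η1 : ℝ → ℝ)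
    (hx0 : ∀ s ∈ Ioi (0:ℝ), DifferentiableAt ℝ x0 s)
    (hx1 : ∀ s ∈ Ioi (0:ℝ), DifferentiableAt ℝ x1 s)
    (hy0 : ∀ s ∈ Ioi (0:ℝ), DifferentiableAt ℝ y0 s)
    (hy1 : ∀ s ∈ Ioi (0:ℝ), DifferentiableAt ℝ y1 s)
    (hξ0 : ∀ s ∈ Ioi (0:ℝ), DifferentiableAt ℝ ξ0 s)
    (hξ1 : ∀ s ∈ Ioi (0:ℝ), DifferentiableAt ℝ ξ1 s)
    (hη0 : ∀ s ∈ Ioi (0:ℝ), DifferentiableAt ℝ η0 s)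
    (hη1 : ∀ s ∈ Ioi (0:ℝ), DifferentiableAt ℝ η1 s)
    (e1 : ∀ s ∈ Ioi (0:ℝ), s * deriv x0 s = -η0 s * x0 s - x1 s)
    (e2 : ∀ s ∈ Ioi (0:ℝ), s * deriv x1 s =
      -η1 s * x0 s + s * x0 s + ξ0 s * x0 s + ξ1 s * x1 s)
    (e3 : ∀ s ∈ Ioi (0:ℝ), s * deriv y1 s = -ξ1 s * y1 s + y0 s)
    (e4 : ∀ s ∈ Ioi (0:ℝ), s * deriv y0 s =
      -ξ0 s * y1 s - s * y1 s + η0 s * y0 s + η1 s * y1 s) :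
    (∀ s ∈ Ioi (0:ℝ), deriv (fun t => x0 t * y0 t + x1 t * y1 t) s = 0) ∧
    (∀ s ∈ Ioi (0:ℝ), ∀ t ∈ Ioi (0:ℝ),
      x0 s * y0 s + x1 s * y1 s = x0 t * y0 t + x1 t * y1 t) := by
  set f : ℝ → ℝ := fun t => x0 t * y0 t + x1 t * y1 t with hf
  have key : ∀ s ∈ Ioi (0:ℝ), HasDerivAt f 0 s := by
    intro s hs
    have hs0 : (0:ℝ) < s := hs
    have h : HasDerivAt f
        (deriv x0 s * y0 s + x0 s * deriv y0 s +
          (deriv x1 s * y1 s + x1 s * deriv y1 s)) s :=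
      (((hx0 s hs).hasDerivAt.mul (hy0 s hs).hasDerivAt).add
        ((hx1 s hs).hasDerivAt.mul (hy1 s hs).hasDerivAt))
    have hD : deriv x0 s * y0 s + x0 s * deriv y0 s +
        (deriv x1 s * y1 s + x1 s * deriv y1 s) = 0 := by
      have hmul : s * (deriv x0 s * y0 s + x0 s * deriv y0 s +
          (deriv x1 s * y1 s + x1 s * deriv y1 s)) = 0 := by
        have h1 := e1 s hs; have h2 := e2 s hs; have h3 := e3 s hs; have h4 := e4 s hs
        calc s * (deriv x0 s * y0 s + x0 s * deriv y0 s +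
              (deriv x1 s * y1 s + x1 s * deriv y1 s))
            = (s * deriv x0 s) * y0 s + x0 s * (s * deriv y0 s) +
              ((s * deriv x1 s) * y1 s + x1 s * (s * deriv y1 s)) := by ring
          _ = (-η0 s * x0 s - x1 s) * y0 s +
              x0 s * (-ξ0 s * y1 s - s * y1 s + η0 s * y0 s + η1 s * y1 s) +
              ((-η1 s * x0 s + s * x0 s + ξ0 s * x0 s + ξ1 s * x1 s) * y1 s +
                x1 s * (-ξ1 s * y1 s + y0 s)) := by rw [h1, h2, h3, h4]
          _ = 0 := by ring
      exact (mul_eq_zero.mp hmul).resolve_left hs0.ne'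
    exact hD ▸ h
  have hderiv : ∀ s ∈ Ioi (0:ℝ), deriv f s = 0 := fun s hs => (key s hs).deriv
  refine ⟨hderiv, ?_⟩
  intro s hs t ht
  have hconst := (convex_Ioi (0:ℝ)).is_const_of_fderivWithin_eq_zero
    (f := f) (fun z hz => ((key z hz).differentiableAt).differentiableWithinAt)
    (fun z hz => by
      rw [fderivWithin_of_isOpen isOpen_Ioi hz]
      have := (key z hz).hasFDerivAt.fderiv
      rw [this]; ext u; simp) hs ht
  exact hconst
end

section
/- Suppose x0, x1, y0, y1, ξ0, ξ1, η0, η1 : ℝ → ℝ are differentiable on (0,∞) and satisfy the full M=1 system: s·x0' = -η0·x0 - x1, s·x1' = -η1·x0 + s·x0 + ξ0·x0 + ξ1·x1, s·y1' = -ξ1·y1 + y0, s·y0' = -ξ0·y1 - s·y1 + η0·y0 + η1·y1, ξ0' = x0·y0, ξ1' = x0·y1, η0' = x0·y1, η1' = x1·y1. Then the function E(s) := (η1 - ξ0 - s)·x0·y1 + η0·x0·y0 - ξ1·x1·y1 + x1·y0 + η0 has derivative zero on (0,∞) (so E is constant). -/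
/-!
Differentiating `E` produces terms linear in the eight derivatives. After multiplying by `s`,
the four equations for `x0, x1, y0, y1` and the four for `ξ0, ξ1, η0, η1` substitute for every
derivative, and the resulting polynomial identity collapses to zero.
-/

open Set

def hardEdgeEnergy (x0 x1 y0 y1 ξ0 ξ1 η0 η1 : ℝ → ℝ) (t : ℝ) : ℝ :=
  (η1 t - ξ0 t - t) * x0 t * y1 t + η0 t * x0 t * y0 t - ξ1 t * x1 t * y1 t + x1 t * y0 t + η0 t

def energyRate (s x0 x1 y0 y1 ξ0 ξ1 η0 η1 dx0 dx1 dy0 dy1 dξ0 dξ1 dη0 dη1 : ℝ) : ℝ :=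
  (dη1 - dξ0 - 1) * x0 * y1 + (η1 - ξ0 - s) * (dx0 * y1 + x0 * dy1)
    + dη0 * x0 * y0 + η0 * (dx0 * y0 + x0 * dy0)
    - dξ1 * x1 * y1 - ξ1 * (dx1 * y1 + x1 * dy1)
    + dx1 * y0 + x1 * dy0 + dη0

theorem energyRate_eq_zero {s x0 x1 y0 y1 ξ0 ξ1 η0 η1 dx0 dx1 dy0 dy1 dξ0 dξ1 dη0 dη1 : ℝ}
    (hs : s ≠ 0)
    (e1 : s * dx0 = -η0 * x0 - x1)
    (e2 : s * dx1 = -η1 * x0 + s * x0 + ξ0 * x0 + ξ1 * x1)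
    (e3 : s * dy1 = -ξ1 * y1 + y0)
    (e4 : s * dy0 = -ξ0 * y1 - s * y1 + η0 * y0 + η1 * y1)
    (e5 : dξ0 = x0 * y0) (e6 : dξ1 = x0 * y1) (e7 : dη0 = x0 * y1) (e8 : dη1 = x1 * y1) :
    energyRate s x0 x1 y0 y1 ξ0 ξ1 η0 η1 dx0 dx1 dy0 dy1 dξ0 dξ1 dη0 dη1 = 0 := by
  refine (mul_eq_zero.mp ?_).resolve_left hs
  unfold energyRate
  -- each equation is weighted by the partial derivative of `E` in its variable (times `s` for `e5`–`e8`)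
  linear_combination ((η1 - ξ0 - s) * y1 + η0 * y0) * e1 + (-ξ1 * y1 + y0) * e2
    + ((η1 - ξ0 - s) * x0 - ξ1 * x1) * e3 + (η0 * x0 + x1) * e4
    - s * x0 * y1 * e5 - s * x1 * y1 * e6 + s * (x0 * y0 + 1) * e7 + s * x0 * y1 * e8

theorem hasDerivAt_hardEdgeEnergy {x0 x1 y0 y1 ξ0 ξ1 η0 η1 : ℝ → ℝ} {s : ℝ}
    (hx0 : DifferentiableAt ℝ x0 s) (hx1 : DifferentiableAt ℝ x1 s)
    (hy0 : DifferentiableAt ℝ y0 s) (hy1 : DifferentiableAt ℝ y1 s)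
    (hξ0 : DifferentiableAt ℝ ξ0 s) (hξ1 : DifferentiableAt ℝ ξ1 s)
    (hη0 : DifferentiableAt ℝ η0 s) (hη1 : DifferentiableAt ℝ η1 s) :
    HasDerivAt (hardEdgeEnergy x0 x1 y0 y1 ξ0 ξ1 η0 η1)
      (energyRate s (x0 s) (x1 s) (y0 s) (y1 s) (ξ0 s) (ξ1 s) (η0 s) (η1 s)
        (deriv x0 s) (deriv x1 s) (deriv y0 s) (deriv y1 s)
        (deriv ξ0 s) (deriv ξ1 s) (deriv η0 s) (deriv η1 s)) s := by
  have h := (((((((hη1.hasDerivAt.sub hξ0.hasDerivAt).sub (hasDerivAt_id s)).mul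
      hx0.hasDerivAt).mul hy1.hasDerivAt).add
      ((hη0.hasDerivAt.mul hx0.hasDerivAt).mul hy0.hasDerivAt)).sub
      ((hξ1.hasDerivAt.mul hx1.hasDerivAt).mul hy1.hasDerivAt)).add
      (hx1.hasDerivAt.mul hy0.hasDerivAt)).add hη0.hasDerivAt
  exact h.congr_deriv (by simp only [energyRate, Pi.mul_apply, Pi.sub_apply, id]; ring)

theorem stmt_3 (x0 x1 y0 y1 ξ0 ξ1 η0 η1 : ℝ → ℝ)
    (hx0 : ∀ s ∈ Ioi (0:ℝ), DifferentiableAt ℝ x0 s)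
    (hx1 : ∀ s ∈ Ioi (0:ℝ), DifferentiableAt ℝ x1 s)
    (hy0 : ∀ s ∈ Ioi (0:ℝ), DifferentiableAt ℝ y0 s)
    (hy1 : ∀ s ∈ Ioi (0:ℝ), DifferentiableAt ℝ y1 s)
    (hξ0 : ∀ s ∈ Ioi (0:ℝ), DifferentiableAt ℝ ξ0 s)
    (hξ1 : ∀ s ∈ Ioi (0:ℝ), DifferentiableAt ℝ ξ1 s)
    (hη0 : ∀ s ∈ Ioi (0:ℝ), DifferentiableAt ℝ η0 s)
    (hη1 : ∀ s ∈ Ioi (0:ℝ), DifferentiableAt ℝ η1 s)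
    (e1 : ∀ s ∈ Ioi (0:ℝ), s * deriv x0 s = -η0 s * x0 s - x1 s)
    (e2 : ∀ s ∈ Ioi (0:ℝ), s * deriv x1 s =
      -η1 s * x0 s + s * x0 s + ξ0 s * x0 s + ξ1 s * x1 s)
    (e3 : ∀ s ∈ Ioi (0:ℝ), s * deriv y1 s = -ξ1 s * y1 s + y0 s)
    (e4 : ∀ s ∈ Ioi (0:ℝ), s * deriv y0 s =
      -ξ0 s * y1 s - s * y1 s + η0 s * y0 s + η1 s * y1 s)
    (e5 : ∀ s ∈ Ioi (0:ℝ), deriv ξ0 s = x0 s * y0 s)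
    (e6 : ∀ s ∈ Ioi (0:ℝ), deriv ξ1 s = x0 s * y1 s)
    (e7 : ∀ s ∈ Ioi (0:ℝ), deriv η0 s = x0 s * y1 s)
    (e8 : ∀ s ∈ Ioi (0:ℝ), deriv η1 s = x1 s * y1 s) :
    ∀ s ∈ Ioi (0:ℝ),
      deriv (fun t => (η1 t - ξ0 t - t) * x0 t * y1 t + η0 t * x0 t * y0 t
        - ξ1 t * x1 t * y1 t + x1 t * y0 t + η0 t) s = 0 := by
  intro s hs
  change deriv (hardEdgeEnergy x0 x1 y0 y1 ξ0 ξ1 η0 η1) s = 0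
  rw [(hasDerivAt_hardEdgeEnergy (hx0 s hs) (hx1 s hs) (hy0 s hs) (hy1 s hs)
    (hξ0 s hs) (hξ1 s hs) (hη0 s hs) (hη1 s hs)).deriv]
  exact energyRate_eq_zero (ne_of_gt hs) (e1 s hs) (e2 s hs) (e3 s hs) (e4 s hs)
    (e5 s hs) (e6 s hs) (e7 s hs) (e8 s hs)
end

section
/- Suppose x0, x1, x2, y0, y1, y2, ξ0, ξ1, ξ2, η0, η1, η2 : ℝ → ℝ are differentiable on (0,∞) and satisfy the M=2 system: s·x0' = −η0·x0 − x1, s·x1' = −η1·x0 − x2, s·x2' = −η2·x0 − s·x0 + ξ0·x0 + ξ1·x1 + ξ2·x2, s·y2' = −ξ2·y2 + y1, s·y1' = −ξ1·y2 + y0, s·y0' = −ξ0·y2 + s·y2 + η0·y0 + η1·y1 + η2·y2, ξ0' = −x0·y0, ξ1' = −x0·y1, ξ2' = −x0·y2, η0' = −x0·y2, η1' = −x1·y2, η2' = −x2·y2. Then (x0·y0 + x1·y1 + x2·y2)' = 0 on (0,∞). -/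
open Set Matrix

theorem dotProduct_add_dotProduct_eq_zero_of_adjoint {ι R : Type*} [Fintype ι] [Field R]
    (C : Matrix ι ι R) {s : R} (hs : s ≠ 0) {x x' y y' : ι → R}
    (hx : s • x' = -(C *ᵥ x)) (hy : s • y' = Cᵀ *ᵥ y) :
    x' ⬝ᵥ y + x ⬝ᵥ y' = 0 := by
  have h : s • (x' ⬝ᵥ y + x ⬝ᵥ y') = 0 := by
    rw [smul_add, ← smul_dotProduct, ← dotProduct_smul, hx, hy, dotProduct_mulVec,
      vecMul_transpose, neg_dotProduct, neg_add_cancel]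
  exact (smul_eq_zero.mp h).resolve_left hs

theorem hasDerivAt_sum_mul {ι : Type*} [Fintype ι] {x y : ι → ℝ → ℝ} {x' y' : ι → ℝ} {s : ℝ}
    (hx : ∀ i, HasDerivAt (x i) (x' i) s) (hy : ∀ i, HasDerivAt (y i) (y' i) s) :
    HasDerivAt (fun t => ∑ i, x i t * y i t)
      (x' ⬝ᵥ (fun i => y i s) + (fun i => x i s) ⬝ᵥ y') s := by
  have h := HasDerivAt.fun_sum (u := Finset.univ) fun i _ => (hx i).fun_mul (hy i)
  rwa [Finset.sum_add_distrib] at h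

theorem stmt_9_general (x0 x1 x2 y0 y1 y2 ξ0 ξ1 ξ2 η0 η1 η2 : ℝ → ℝ)
    (hx0 : ∀ s ∈ Ioi (0:ℝ), DifferentiableAt ℝ x0 s)
    (hx1 : ∀ s ∈ Ioi (0:ℝ), DifferentiableAt ℝ x1 s)
    (hx2 : ∀ s ∈ Ioi (0:ℝ), DifferentiableAt ℝ x2 s)
    (hy0 : ∀ s ∈ Ioi (0:ℝ), DifferentiableAt ℝ y0 s)
    (hy1 : ∀ s ∈ Ioi (0:ℝ), DifferentiableAt ℝ y1 s)
    (hy2 : ∀ s ∈ Ioi (0:ℝ), DifferentiableAt ℝ y2 s)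
    (e1 : ∀ s ∈ Ioi (0:ℝ), s * deriv x0 s = -η0 s * x0 s - x1 s)
    (e2 : ∀ s ∈ Ioi (0:ℝ), s * deriv x1 s = -η1 s * x0 s - x2 s)
    (e3 : ∀ s ∈ Ioi (0:ℝ), s * deriv x2 s =
      -η2 s * x0 s - s * x0 s + ξ0 s * x0 s + ξ1 s * x1 s + ξ2 s * x2 s)
    (e4 : ∀ s ∈ Ioi (0:ℝ), s * deriv y2 s = -ξ2 s * y2 s + y1 s)
    (e5 : ∀ s ∈ Ioi (0:ℝ), s * deriv y1 s = -ξ1 s * y2 s + y0 s)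
    (e6 : ∀ s ∈ Ioi (0:ℝ), s * deriv y0 s =
      -ξ0 s * y2 s + s * y2 s + η0 s * y0 s + η1 s * y1 s + η2 s * y2 s) :
    ∀ s ∈ Ioi (0:ℝ),
      deriv (fun t => x0 t * y0 t + x1 t * y1 t + x2 t * y2 t) s = 0 := by
  intro s hs
  let x : Fin 3 → ℝ → ℝ := ![x0, x1, x2]
  let y : Fin 3 → ℝ → ℝ := ![y0, y1, y2]
  -- the system reads `s x' = -C x`, `s y' = Cᵀ y`
  let C : Matrix (Fin 3) (Fin 3) ℝ :=
    !![η0 s, 1, 0; η1 s, 0, 1; η2 s + s - ξ0 s, -ξ1 s, -ξ2 s]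
  have hx : ∀ i, HasDerivAt (x i) (deriv (x i) s) s := by
    intro i; fin_cases i
    exacts [(hx0 s hs).hasDerivAt, (hx1 s hs).hasDerivAt, (hx2 s hs).hasDerivAt]
  have hy : ∀ i, HasDerivAt (y i) (deriv (y i) s) s := by
    intro i; fin_cases i
    exacts [(hy0 s hs).hasDerivAt, (hy1 s hs).hasDerivAt, (hy2 s hs).hasDerivAt]
  have hCx : s • (fun i => deriv (x i) s) = -(C *ᵥ fun i => x i s) := by
    ext i; fin_cases i <;> simp [x, C, mulVec, dotProduct] <;>
      linarith [e1 s hs, e2 s hs, e3 s hs]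
  have hCy : s • (fun i => deriv (y i) s) = Cᵀ *ᵥ fun i => y i s := by
    ext i; fin_cases i <;> simp [y, C, mulVec, dotProduct, Fin.sum_univ_three] <;>
      linarith [e4 s hs, e5 s hs, e6 s hs]
  have hsum := hasDerivAt_sum_mul hx hy
  rw [dotProduct_add_dotProduct_eq_zero_of_adjoint C hs.ne' hCx hCy] at hsum
  simpa [x, y, Fin.sum_univ_three] using hsum.deriv

theorem stmt_9 (x0 x1 x2 y0 y1 y2 ξ0 ξ1 ξ2 η0 η1 η2 : ℝ → ℝ)
    (hx0 : ∀ s ∈ Ioi (0:ℝ), DifferentiableAt ℝ x0 s)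
    (hx1 : ∀ s ∈ Ioi (0:ℝ), DifferentiableAt ℝ x1 s)
    (hx2 : ∀ s ∈ Ioi (0:ℝ), DifferentiableAt ℝ x2 s)
    (hy0 : ∀ s ∈ Ioi (0:ℝ), DifferentiableAt ℝ y0 s)
    (hy1 : ∀ s ∈ Ioi (0:ℝ), DifferentiableAt ℝ y1 s)
    (hy2 : ∀ s ∈ Ioi (0:ℝ), DifferentiableAt ℝ y2 s)
    (hξ0 : ∀ s ∈ Ioi (0:ℝ), DifferentiableAt ℝ ξ0 s)
    (hξ1 : ∀ s ∈ Ioi (0:ℝ), DifferentiableAt ℝ ξ1 s)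
    (hξ2 : ∀ s ∈ Ioi (0:ℝ), DifferentiableAt ℝ ξ2 s)
    (hη0 : ∀ s ∈ Ioi (0:ℝ), DifferentiableAt ℝ η0 s)
    (hη1 : ∀ s ∈ Ioi (0:ℝ), DifferentiableAt ℝ η1 s)
    (hη2 : ∀ s ∈ Ioi (0:ℝ), DifferentiableAt ℝ η2 s)
    (e1 : ∀ s ∈ Ioi (0:ℝ), s * deriv x0 s = -η0 s * x0 s - x1 s)
    (e2 : ∀ s ∈ Ioi (0:ℝ), s * deriv x1 s = -η1 s * x0 s - x2 s)
    (e3 : ∀ s ∈ Ioi (0:ℝ), s * deriv x2 s =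
      -η2 s * x0 s - s * x0 s + ξ0 s * x0 s + ξ1 s * x1 s + ξ2 s * x2 s)
    (e4 : ∀ s ∈ Ioi (0:ℝ), s * deriv y2 s = -ξ2 s * y2 s + y1 s)
    (e5 : ∀ s ∈ Ioi (0:ℝ), s * deriv y1 s = -ξ1 s * y2 s + y0 s)
    (e6 : ∀ s ∈ Ioi (0:ℝ), s * deriv y0 s =
      -ξ0 s * y2 s + s * y2 s + η0 s * y0 s + η1 s * y1 s + η2 s * y2 s)
    (e7 : ∀ s ∈ Ioi (0:ℝ), deriv ξ0 s = -(x0 s * y0 s))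
    (e8 : ∀ s ∈ Ioi (0:ℝ), deriv ξ1 s = -(x0 s * y1 s))
    (e9 : ∀ s ∈ Ioi (0:ℝ), deriv ξ2 s = -(x0 s * y2 s))
    (e10 : ∀ s ∈ Ioi (0:ℝ), deriv η0 s = -(x0 s * y2 s))
    (e11 : ∀ s ∈ Ioi (0:ℝ), deriv η1 s = -(x1 s * y2 s))
    (e12 : ∀ s ∈ Ioi (0:ℝ), deriv η2 s = -(x2 s * y2 s)) :
    ∀ s ∈ Ioi (0:ℝ),
      deriv (fun t => x0 t * y0 t + x1 t * y1 t + x2 t * y2 t) s = 0 :=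
  stmt_9_general x0 x1 x2 y0 y1 y2 ξ0 ξ1 ξ2 η0 η1 η2 hx0 hx1 hx2 hy0 hy1 hy2 e1 e2 e3 e4 e5 e6
end

section
/- Under the hypotheses of the M=2 system (the twelve ODEs s·x0' = −η0·x0 − x1, s·x1' = −η1·x0 − x2, s·x2' = −η2·x0 − s·x0 + ξ0·x0 + ξ1·x1 + ξ2·x2, s·y2' = −ξ2·y2 + y1, s·y1' = −ξ1·y2 + y0, s·y0' = −ξ0·y2 + s·y2 + η0·y0 + η1·y1 + η2·y2, ξ0' = −x0·y0, ξ1' = −x0·y1, ξ2' = −x0·y2, η0' = −x0·y2, η1' = −x1·y2, η2' = −x2·y2 on (0,∞)), the function s·x0·y2 − (η0·ξ2 + η1 − ξ1 − η0) has zero derivative on (0,∞). -/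
open Set

theorem hasDerivAt_firstIntegral {x0 y2 ξ1 ξ2 η0 η1 : ℝ → ℝ} {s : ℝ}
    (hx0 : DifferentiableAt ℝ x0 s) (hy2 : DifferentiableAt ℝ y2 s)
    (hξ1 : DifferentiableAt ℝ ξ1 s) (hξ2 : DifferentiableAt ℝ ξ2 s)
    (hη0 : DifferentiableAt ℝ η0 s) (hη1 : DifferentiableAt ℝ η1 s) :
    HasDerivAt (fun t => t * x0 t * y2 t - (η0 t * ξ2 t + η1 t - ξ1 t - η0 t))
      ((x0 s + s * deriv x0 s) * y2 s + s * x0 s * deriv y2 s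
        - (deriv η0 s * ξ2 s + η0 s * deriv ξ2 s + deriv η1 s - deriv ξ1 s - deriv η0 s)) s := by
  simpa only [one_mul] using
    (((hasDerivAt_id' s).fun_mul hx0.hasDerivAt).fun_mul hy2.hasDerivAt).fun_sub
    ((((hη0.hasDerivAt.fun_mul hξ2.hasDerivAt).fun_add hη1.hasDerivAt).fun_sub
      hξ1.hasDerivAt).fun_sub hη0.hasDerivAt)

theorem stmt_10_general (x0 x1 y1 y2 ξ1 ξ2 η0 η1 : ℝ → ℝ)
    (hx0 : ∀ s ∈ Ioi (0:ℝ), DifferentiableAt ℝ x0 s)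
    (hy2 : ∀ s ∈ Ioi (0:ℝ), DifferentiableAt ℝ y2 s)
    (hξ1 : ∀ s ∈ Ioi (0:ℝ), DifferentiableAt ℝ ξ1 s)
    (hξ2 : ∀ s ∈ Ioi (0:ℝ), DifferentiableAt ℝ ξ2 s)
    (hη0 : ∀ s ∈ Ioi (0:ℝ), DifferentiableAt ℝ η0 s)
    (hη1 : ∀ s ∈ Ioi (0:ℝ), DifferentiableAt ℝ η1 s)
    (e1 : ∀ s ∈ Ioi (0:ℝ), s * deriv x0 s = -η0 s * x0 s - x1 s)
    (e4 : ∀ s ∈ Ioi (0:ℝ), s * deriv y2 s = -ξ2 s * y2 s + y1 s)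
    (e8 : ∀ s ∈ Ioi (0:ℝ), deriv ξ1 s = -(x0 s * y1 s))
    (e9 : ∀ s ∈ Ioi (0:ℝ), deriv ξ2 s = -(x0 s * y2 s))
    (e10 : ∀ s ∈ Ioi (0:ℝ), deriv η0 s = -(x0 s * y2 s))
    (e11 : ∀ s ∈ Ioi (0:ℝ), deriv η1 s = -(x1 s * y2 s)) :
    ∀ s ∈ Ioi (0:ℝ),
      deriv (fun t => t * x0 t * y2 t
        - (η0 t * ξ2 t + η1 t - ξ1 t - η0 t)) s = 0 := by
  intro s hs
  rw [(hasDerivAt_firstIntegral (hx0 s hs) (hy2 s hs) (hξ1 s hs) (hξ2 s hs) (hη0 s hs)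
    (hη1 s hs)).deriv]
  -- The product rule yields `s * x0'` and `s * y2'`, the left sides of `e1` and `e4`,
  -- so the equations substitute without dividing by `s`.
  linear_combination y2 s * e1 s hs + x0 s * e4 s hs + e8 s hs - η0 s * e9 s hs
    - (ξ2 s - 1) * e10 s hs - e11 s hs

theorem stmt_10 (x0 x1 x2 y0 y1 y2 ξ0 ξ1 ξ2 η0 η1 η2 : ℝ → ℝ)
    (hx0 : ∀ s ∈ Ioi (0:ℝ), DifferentiableAt ℝ x0 s)
    (hx1 : ∀ s ∈ Ioi (0:ℝ), DifferentiableAt ℝ x1 s)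
    (hx2 : ∀ s ∈ Ioi (0:ℝ), DifferentiableAt ℝ x2 s)
    (hy0 : ∀ s ∈ Ioi (0:ℝ), DifferentiableAt ℝ y0 s)
    (hy1 : ∀ s ∈ Ioi (0:ℝ), DifferentiableAt ℝ y1 s)
    (hy2 : ∀ s ∈ Ioi (0:ℝ), DifferentiableAt ℝ y2 s)
    (hξ0 : ∀ s ∈ Ioi (0:ℝ), DifferentiableAt ℝ ξ0 s)
    (hξ1 : ∀ s ∈ Ioi (0:ℝ), DifferentiableAt ℝ ξ1 s)
    (hξ2 : ∀ s ∈ Ioi (0:ℝ), DifferentiableAt ℝ ξ2 s)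
    (hη0 : ∀ s ∈ Ioi (0:ℝ), DifferentiableAt ℝ η0 s)
    (hη1 : ∀ s ∈ Ioi (0:ℝ), DifferentiableAt ℝ η1 s)
    (hη2 : ∀ s ∈ Ioi (0:ℝ), DifferentiableAt ℝ η2 s)
    (e1 : ∀ s ∈ Ioi (0:ℝ), s * deriv x0 s = -η0 s * x0 s - x1 s)
    (e2 : ∀ s ∈ Ioi (0:ℝ), s * deriv x1 s = -η1 s * x0 s - x2 s)
    (e3 : ∀ s ∈ Ioi (0:ℝ), s * deriv x2 s =
      -η2 s * x0 s - s * x0 s + ξ0 s * x0 s + ξ1 s * x1 s + ξ2 s * x2 s)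
    (e4 : ∀ s ∈ Ioi (0:ℝ), s * deriv y2 s = -ξ2 s * y2 s + y1 s)
    (e5 : ∀ s ∈ Ioi (0:ℝ), s * deriv y1 s = -ξ1 s * y2 s + y0 s)
    (e6 : ∀ s ∈ Ioi (0:ℝ), s * deriv y0 s =
      -ξ0 s * y2 s + s * y2 s + η0 s * y0 s + η1 s * y1 s + η2 s * y2 s)
    (e7 : ∀ s ∈ Ioi (0:ℝ), deriv ξ0 s = -(x0 s * y0 s))
    (e8 : ∀ s ∈ Ioi (0:ℝ), deriv ξ1 s = -(x0 s * y1 s))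
    (e9 : ∀ s ∈ Ioi (0:ℝ), deriv ξ2 s = -(x0 s * y2 s))
    (e10 : ∀ s ∈ Ioi (0:ℝ), deriv η0 s = -(x0 s * y2 s))
    (e11 : ∀ s ∈ Ioi (0:ℝ), deriv η1 s = -(x1 s * y2 s))
    (e12 : ∀ s ∈ Ioi (0:ℝ), deriv η2 s = -(x2 s * y2 s)) :
    ∀ s ∈ Ioi (0:ℝ),
      deriv (fun t => t * x0 t * y2 t
        - (η0 t * ξ2 t + η1 t - ξ1 t - η0 t)) s = 0 :=
  stmt_10_general x0 x1 y1 y2 ξ1 ξ2 η0 η1 hx0 hy2 hξ1 hξ2 hη0 hη1 e1 e4 e8 e9 e10 e11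
end

section
/- Under the hypotheses of the twelve coupled M=2 ODEs (as above), the quantity det(C − A) is constant on (0,∞), where C is the 3×3 matrix with rows (−η0, −1, 0), (−η1, 0, −1), (ξ0−η2, ξ1, ξ2) and A is the rank-one matrix with entries A_{jk} = x_j·y_k for j,k ∈ {0,1,2}. Equivalently, the derivative of the expression ξ0 − η2 − η0·ξ1 − ξ2·η1 − x2·y0 + η0·x2·y1 − ξ2·x1·y0 + η0·ξ2·x1·y1 − ξ1·x0·y0 + (ξ0−η2−ξ2·η1)·x0·y1 + ξ1·η1·x0·y2 + (ξ0−η2−η0·ξ1)·x1·y2 + η1·x2·y2 vanishes on (0,∞). -/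
/-!
By the chain rule, the derivative of det(C − A) along a solution is a polynomial in the unknowns
and their derivatives. After substituting the system (the derivatives of the x's and y's carry a
factor 1/s), it vanishes identically.
-/

open Set

def detCA (x0 x1 x2 y0 y1 y2 ξ0 ξ1 ξ2 η0 η1 η2 : ℝ) : ℝ :=
  (!![-η0, -1, 0; -η1, 0, -1; ξ0 - η2, ξ1, ξ2] -
    Matrix.vecMulVec ![x0, x1, x2] ![y0, y1, y2]).det

theorem detCA_eq (x0 x1 x2 y0 y1 y2 ξ0 ξ1 ξ2 η0 η1 η2 : ℝ) :
    detCA x0 x1 x2 y0 y1 y2 ξ0 ξ1 ξ2 η0 η1 η2 =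
      ξ0 - η2 - η0 * ξ1 - ξ2 * η1
        - x2 * y0 + η0 * x2 * y1 - ξ2 * x1 * y0
        + η0 * ξ2 * x1 * y1 - ξ1 * x0 * y0
        + (ξ0 - η2 - ξ2 * η1) * x0 * y1
        + ξ1 * η1 * x0 * y2
        + (ξ0 - η2 - η0 * ξ1) * x1 * y2
        + η1 * x2 * y2 := by
  rw [detCA, Matrix.det_fin_three]
  simp only [Matrix.vecMulVec_cons, Matrix.smul_cons, smul_eq_mul, Matrix.smul_empty,
    Matrix.sub_apply, Matrix.of_apply, Matrix.cons_val', Matrix.cons_val_zero,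
    Matrix.cons_val_one, Matrix.cons_val]
  ring

theorem hasDerivAt_detCA_zero {x0 x1 x2 y0 y1 y2 ξ0 ξ1 ξ2 η0 η1 η2 : ℝ → ℝ} {s : ℝ}
    (hs : s ≠ 0)
    (hx0 : HasDerivAt x0 ((-η0 s * x0 s - x1 s) / s) s)
    (hx1 : HasDerivAt x1 ((-η1 s * x0 s - x2 s) / s) s)
    (hx2 : HasDerivAt x2
      ((-η2 s * x0 s - s * x0 s + ξ0 s * x0 s + ξ1 s * x1 s + ξ2 s * x2 s) / s) s)
    (hy0 : HasDerivAt y0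
      ((-ξ0 s * y2 s + s * y2 s + η0 s * y0 s + η1 s * y1 s + η2 s * y2 s) / s) s)
    (hy1 : HasDerivAt y1 ((-ξ1 s * y2 s + y0 s) / s) s)
    (hy2 : HasDerivAt y2 ((-ξ2 s * y2 s + y1 s) / s) s)
    (hξ0 : HasDerivAt ξ0 (-(x0 s * y0 s)) s)
    (hξ1 : HasDerivAt ξ1 (-(x0 s * y1 s)) s)
    (hξ2 : HasDerivAt ξ2 (-(x0 s * y2 s)) s)
    (hη0 : HasDerivAt η0 (-(x0 s * y2 s)) s)
    (hη1 : HasDerivAt η1 (-(x1 s * y2 s)) s)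
    (hη2 : HasDerivAt η2 (-(x2 s * y2 s)) s) :
    HasDerivAt (fun t => detCA (x0 t) (x1 t) (x2 t) (y0 t) (y1 t) (y2 t)
      (ξ0 t) (ξ1 t) (ξ2 t) (η0 t) (η1 t) (η2 t)) 0 s := by
  simp only [detCA_eq]
  have hξ0η2 := hξ0.fun_sub hη2
  refine (hξ0η2.fun_sub (hη0.fun_mul hξ1) |>.fun_sub (hξ2.fun_mul hη1)
      |>.fun_sub (hx2.fun_mul hy0) |>.fun_add ((hη0.fun_mul hx2).fun_mul hy1)
      |>.fun_sub ((hξ2.fun_mul hx1).fun_mul hy0)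
      |>.fun_add (((hη0.fun_mul hξ2).fun_mul hx1).fun_mul hy1)
      |>.fun_sub ((hξ1.fun_mul hx0).fun_mul hy0)
      |>.fun_add (((hξ0η2.fun_sub (hξ2.fun_mul hη1)).fun_mul hx0).fun_mul hy1)
      |>.fun_add (((hξ1.fun_mul hη1).fun_mul hx0).fun_mul hy2)
      |>.fun_add (((hξ0η2.fun_sub (hη0.fun_mul hξ1)).fun_mul hx1).fun_mul hy2)
      |>.fun_add ((hη1.fun_mul hx2).fun_mul hy2)).congr_deriv ?_
  field_simp
  ring

theorem DifferentiableAt.hasDerivAt_of_mul_deriv_eq {𝕜 : Type*} [NontriviallyNormedField 𝕜]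
    {f : 𝕜 → 𝕜} {x c a : 𝕜} (hf : DifferentiableAt 𝕜 f x) (hc : c ≠ 0)
    (h : c * deriv f x = a) : HasDerivAt f (a / c) x := by
  rw [← h, mul_div_cancel_left₀ _ hc]
  exact hf.hasDerivAt

theorem stmt_12 (x0 x1 x2 y0 y1 y2 ξ0 ξ1 ξ2 η0 η1 η2 : ℝ → ℝ)
    (hx0 : ∀ s ∈ Ioi (0:ℝ), DifferentiableAt ℝ x0 s)
    (hx1 : ∀ s ∈ Ioi (0:ℝ), DifferentiableAt ℝ x1 s)
    (hx2 : ∀ s ∈ Ioi (0:ℝ), DifferentiableAt ℝ x2 s)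
    (hy0 : ∀ s ∈ Ioi (0:ℝ), DifferentiableAt ℝ y0 s)
    (hy1 : ∀ s ∈ Ioi (0:ℝ), DifferentiableAt ℝ y1 s)
    (hy2 : ∀ s ∈ Ioi (0:ℝ), DifferentiableAt ℝ y2 s)
    (hξ0 : ∀ s ∈ Ioi (0:ℝ), DifferentiableAt ℝ ξ0 s)
    (hξ1 : ∀ s ∈ Ioi (0:ℝ), DifferentiableAt ℝ ξ1 s)
    (hξ2 : ∀ s ∈ Ioi (0:ℝ), DifferentiableAt ℝ ξ2 s)
    (hη0 : ∀ s ∈ Ioi (0:ℝ), DifferentiableAt ℝ η0 s)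
    (hη1 : ∀ s ∈ Ioi (0:ℝ), DifferentiableAt ℝ η1 s)
    (hη2 : ∀ s ∈ Ioi (0:ℝ), DifferentiableAt ℝ η2 s)
    (e1 : ∀ s ∈ Ioi (0:ℝ), s * deriv x0 s = -η0 s * x0 s - x1 s)
    (e2 : ∀ s ∈ Ioi (0:ℝ), s * deriv x1 s = -η1 s * x0 s - x2 s)
    (e3 : ∀ s ∈ Ioi (0:ℝ), s * deriv x2 s =
      -η2 s * x0 s - s * x0 s + ξ0 s * x0 s + ξ1 s * x1 s + ξ2 s * x2 s)
    (e4 : ∀ s ∈ Ioi (0:ℝ), s * deriv y2 s = -ξ2 s * y2 s + y1 s)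
    (e5 : ∀ s ∈ Ioi (0:ℝ), s * deriv y1 s = -ξ1 s * y2 s + y0 s)
    (e6 : ∀ s ∈ Ioi (0:ℝ), s * deriv y0 s =
      -ξ0 s * y2 s + s * y2 s + η0 s * y0 s + η1 s * y1 s + η2 s * y2 s)
    (e7 : ∀ s ∈ Ioi (0:ℝ), deriv ξ0 s = -(x0 s * y0 s))
    (e8 : ∀ s ∈ Ioi (0:ℝ), deriv ξ1 s = -(x0 s * y1 s))
    (e9 : ∀ s ∈ Ioi (0:ℝ), deriv ξ2 s = -(x0 s * y2 s))
    (e10 : ∀ s ∈ Ioi (0:ℝ), deriv η0 s = -(x0 s * y2 s))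
    (e11 : ∀ s ∈ Ioi (0:ℝ), deriv η1 s = -(x1 s * y2 s))
    (e12 : ∀ s ∈ Ioi (0:ℝ), deriv η2 s = -(x2 s * y2 s)) :
    ∀ s ∈ Ioi (0:ℝ),
      deriv (fun t => ξ0 t - η2 t - η0 t * ξ1 t - ξ2 t * η1 t
        - x2 t * y0 t + η0 t * x2 t * y1 t - ξ2 t * x1 t * y0 t
        + η0 t * ξ2 t * x1 t * y1 t - ξ1 t * x0 t * y0 t
        + (ξ0 t - η2 t - ξ2 t * η1 t) * x0 t * y1 t
        + ξ1 t * η1 t * x0 t * y2 t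
        + (ξ0 t - η2 t - η0 t * ξ1 t) * x1 t * y2 t
        + η1 t * x2 t * y2 t) s = 0 := by
  intro s hs
  have hs0 : s ≠ 0 := hs.ne'
  have hconst := hasDerivAt_detCA_zero hs0
    ((hx0 s hs).hasDerivAt_of_mul_deriv_eq hs0 (e1 s hs))
    ((hx1 s hs).hasDerivAt_of_mul_deriv_eq hs0 (e2 s hs))
    ((hx2 s hs).hasDerivAt_of_mul_deriv_eq hs0 (e3 s hs))
    ((hy0 s hs).hasDerivAt_of_mul_deriv_eq hs0 (e6 s hs))
    ((hy1 s hs).hasDerivAt_of_mul_deriv_eq hs0 (e5 s hs))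
    ((hy2 s hs).hasDerivAt_of_mul_deriv_eq hs0 (e4 s hs))
    ((hξ0 s hs).hasDerivAt.congr_deriv (e7 s hs))
    ((hξ1 s hs).hasDerivAt.congr_deriv (e8 s hs))
    ((hξ2 s hs).hasDerivAt.congr_deriv (e9 s hs))
    ((hη0 s hs).hasDerivAt.congr_deriv (e10 s hs))
    ((hη1 s hs).hasDerivAt.congr_deriv (e11 s hs))
    ((hη2 s hs).hasDerivAt.congr_deriv (e12 s hs))
  simp only [detCA_eq] at hconst
  exact hconst.deriv
end
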